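/- If h : ℝ → ℝ is differentiable with h'(x) ∈ [0,1] for all x (e.g. h = tanh), and v, w ∈ ℝ^D satisfy wᵀv ≥ −1 + δ for some δ > 0, then the planar flow T(z) = z + v·h(wᵀz + b) has strictly positive Jacobian determinant everywhere: det(∂T/∂z) = 1 + h'(wᵀz + b)(wᵀv) ≥ δ' > 0 for some δ' depending on δ. -/

import Mathlib

/-! The Jacobian of `T` is the rank-one perturbation `id + h'(⟪w, z⟫ + b) v wᵀ` of the identity,
so by the matrix determinant lemma its determinant is `1 + h'(⟪w, z⟫ + b) ⟪w, v⟫`. As `h'` takes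
values in `[0, 1]`, this is at least `1` when `⟪w, v⟫ ≥ 0` and at least `1 + ⟪w, v⟫ ≥ δ`
otherwise, so `δ' = min δ 1` works. -/

open scoped RealInnerProductSpace

theorem LinearMap.det_id_add_smulRight {R M : Type*} [CommRing R] [AddCommGroup M] [Module R M]
    [Module.Free R M] [Module.Finite R M] (f : M →ₗ[R] R) (v : M) :
    LinearMap.det (LinearMap.id + f.smulRight v) = 1 + f v := by
  classical
  let b := Module.Free.chooseBasis R M
  have hM : LinearMap.toMatrix b b (LinearMap.id + f.smulRight v) =
      1 + Matrix.replicateCol Unit (b.repr v) * Matrix.replicateRow Unit (f ∘ b) := by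
    ext i j
    simp [LinearMap.toMatrix_apply, Matrix.one_apply, Matrix.mul_apply, Finsupp.single_apply,
      eq_comm, mul_comm]
  have hfv : (f ∘ b) ⬝ᵥ b.repr v = f v := by
    conv_rhs => rw [← b.sum_repr v]
    simp only [map_sum, map_smul, smul_eq_mul, dotProduct, Function.comp_apply, mul_comm]
  rw [← LinearMap.det_toMatrix b, hM, Matrix.det_one_add_replicateCol_mul_replicateRow, hfv]

section PlanarFlow

variable {E : Type*} [NormedAddCommGroup E] [NormedSpace ℝ E] (ℓ : E →L[ℝ] ℝ) (v : E) (b : ℝ)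
  {h : ℝ → ℝ}

theorem hasFDerivAt_planarFlow {z : E} (hh : DifferentiableAt ℝ h (ℓ z + b)) :
    HasFDerivAt (fun u => u + h (ℓ u + b) • v)
      (ContinuousLinearMap.id ℝ E + ℓ.smulRight (deriv h (ℓ z + b) • v)) z := by
  have hfactor : HasFDerivAt (fun u => h (ℓ u + b)) (deriv h (ℓ z + b) • ℓ) z :=
    hh.hasDerivAt.comp_hasFDerivAt z (ℓ.hasFDerivAt.add_const b)
  refine ((hasFDerivAt_id z).add (hfactor.smul_const v)).congr_fderiv ?_
  ext u
  simp [smul_smul, mul_comm]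

theorem det_fderiv_planarFlow [FiniteDimensional ℝ E] {z : E}
    (hh : DifferentiableAt ℝ h (ℓ z + b)) :
    LinearMap.det (fderiv ℝ (fun u => u + h (ℓ u + b) • v) z).toLinearMap =
      1 + deriv h (ℓ z + b) * ℓ v := by
  rw [(hasFDerivAt_planarFlow ℓ v b hh).fderiv, ContinuousLinearMap.toLinearMap_add,
    ContinuousLinearMap.coe_id, ContinuousLinearMap.coe_smulRight]
  simp [LinearMap.det_id_add_smulRight]

end PlanarFlow

theorem min_le_one_add_mul {c a δ : ℝ} (hc : c ∈ Set.Icc (0 : ℝ) 1) (ha : -1 + δ ≤ a) :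
    min δ 1 ≤ 1 + c * a := by
  rcases le_total 0 a with ha₀ | ha₀
  · have : 0 ≤ c * a := mul_nonneg hc.1 ha₀
    linarith [min_le_right δ 1]
  · have : a ≤ c * a := by nlinarith [hc.2]
    linarith [min_le_left δ 1]

/-- If `h' ∈ [0,1]` everywhere and `⟪w,v⟫ ≥ −1 + δ` for some `δ > 0`, then the
planar flow `T(z) = z + h(⟪w,z⟫ + b) • v` has Jacobian determinant
`1 + h'(⟪w,z⟫ + b) ⟪w,v⟫` bounded below by some `δ' > 0` everywhere. -/
theorem stmt12 {D : ℕ} (v w : EuclideanSpace ℝ (Fin D)) (b : ℝ)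
    (h : ℝ → ℝ) (hh : Differentiable ℝ h)
    (hh' : ∀ t, deriv h t ∈ Set.Icc (0 : ℝ) 1)
    (δ : ℝ) (hδ : 0 < δ) (hwv : ⟪w, v⟫ ≥ -1 + δ) :
    ∃ δ' > (0 : ℝ), ∀ z : EuclideanSpace ℝ (Fin D),
      LinearMap.det
          (fderiv ℝ (fun u : EuclideanSpace ℝ (Fin D) =>
            u + h (⟪w, u⟫ + b) • v) z).toLinearMap =
        1 + deriv h (⟪w, z⟫ + b) * ⟪w, v⟫ ∧
      δ' ≤ 1 + deriv h (⟪w, z⟫ + b) * ⟪w, v⟫ :=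
  ⟨min δ 1, lt_min hδ one_pos, fun _ =>
    ⟨det_fderiv_planarFlow (innerSL ℝ w) v b (hh _), min_le_one_add_mul (hh' _) hwv⟩⟩
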